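/- Suppose X has dimension 2. Let A and B be nonempty closed convex subsets of X, set T := P_B ∘ P_A, and suppose T has no fixed point. Then for every x ∈ X the sequence (Tⁿx/‖Tⁿx‖) (eventually well defined) converges. -/

import Mathlib

open Filter Topology

def IsProjector {X : Type*} [NormedAddCommGroup X] [InnerProductSpace ℝ X]
    (C : Set X) (P : X → X) : Prop :=
  ∀ x : X, P x ∈ C ∧ ∀ y ∈ C, ‖x - P x‖ ≤ ‖x - y‖

/-!
The iterates `bₙ = Tⁿ(Tx)` lie in `B`, and the gaps `gₙ = ‖bₙ - P_A bₙ‖` satisfy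
`gₙ₊₁² + ‖bₙ₊₁ - bₙ‖² ≤ gₙ²`, so `bₙ₊₁ - bₙ → 0`. As `T` is continuous and
has no fixed point, `‖bₙ‖ → ∞`. Every cluster point of `bₙ/‖bₙ‖` is then a unit recession
direction of `B`, and of `A` because `P_A bₙ` stays at bounded distance from `bₙ`. In the plane,
two such directions other than `±` each other span everything, which would put a point in
`A ∩ B`, i.e. a fixed point of `T`. So all cluster points lie in `{q, -q}`, and since consecutive
directions become arbitrarily close the sequence cannot keep jumping between the two.
-/

open NormedSpace Metric
open scoped RealInnerProductSpace

section Projector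

variable {X : Type*} [NormedAddCommGroup X] [InnerProductSpace ℝ X] {C : Set X} {P : X → X}

namespace IsProjector

theorem apply_eq_self (hP : IsProjector C P) {x : X} (hx : x ∈ C) : P x = x := by
  have h := (hP x).2 x hx
  rw [sub_self, norm_zero, norm_le_zero_iff, sub_eq_zero] at h
  exact h.symm

theorem norm_sub_eq_iInf (hP : IsProjector C P) (x : X) : ‖x - P x‖ = ⨅ y : C, ‖x - y‖ := by
  have : Nonempty C := ⟨⟨P x, (hP x).1⟩⟩
  exact le_antisymm (le_ciInf fun y => (hP x).2 y y.2)
    (ciInf_le (f := fun y : C => ‖x - y‖) ⟨0, by rintro _ ⟨y, rfl⟩; exact norm_nonneg _⟩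
      ⟨P x, (hP x).1⟩)

theorem inner_sub_le_zero (hP : IsProjector C P) (hC : Convex ℝ C) (x : X) {y : X}
    (hy : y ∈ C) : ⟪x - P x, y - P x⟫ ≤ 0 :=
  (norm_eq_iInf_iff_real_inner_le_zero hC (hP x).1).1 (hP.norm_sub_eq_iInf x) y hy

theorem norm_sub_sq_add_norm_sub_sq_le (hP : IsProjector C P) (hC : Convex ℝ C) (x : X)
    {y : X} (hy : y ∈ C) : ‖x - P x‖ ^ 2 + ‖P x - y‖ ^ 2 ≤ ‖x - y‖ ^ 2 := by
  have h := hP.inner_sub_le_zero hC x hy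
  have e := norm_sub_sq_real (x - P x) (y - P x)
  rw [sub_sub_sub_cancel_right, norm_sub_rev y] at e
  linarith

theorem lipschitzWith_one (hP : IsProjector C P) (hC : Convex ℝ C) : LipschitzWith 1 P := by
  refine LipschitzWith.of_dist_le_mul fun x y => ?_
  rw [NNReal.coe_one, one_mul, dist_eq_norm, dist_eq_norm]
  have hx := hP.inner_sub_le_zero hC x (hP y).1
  have hy := hP.inner_sub_le_zero hC y (hP x).1
  have key : ‖P x - P y‖ ^ 2 ≤ ⟪x - y, P x - P y⟫ := by
    have e : ⟪x - y, P x - P y⟫ =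
        ‖P x - P y‖ ^ 2 - ⟪x - P x, P y - P x⟫ - ⟪y - P y, P x - P y⟫ := by
      rw [← real_inner_self_eq_norm_sq]
      simp only [inner_sub_left, inner_sub_right, real_inner_comm]
      ring
    linarith
  nlinarith [real_inner_le_norm (x - y) (P x - P y), norm_nonneg (P x - P y),
    norm_nonneg (x - y)]

end IsProjector

end Projector

section Normalize

variable {E : Type*} [NormedAddCommGroup E] [NormedSpace ℝ E]

theorem norm_normalize_le (x : E) : ‖normalize x‖ ≤ 1 := by
  rcases eq_or_ne x 0 with rfl | hx
  · simp
  · exact (norm_normalize hx).le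

theorem norm_normalize_sub_normalize_le {x : E} (hx : x ≠ 0) (y : E) :
    ‖normalize x - normalize y‖ ≤ 2 * ‖x - y‖ / ‖x‖ := by
  have hx0 : 0 < ‖x‖ := norm_pos_iff.2 hx
  have e : normalize x - normalize y =
      ‖x‖⁻¹ • (x - y) + (‖x‖⁻¹ * (‖y‖ - ‖x‖)) • normalize y := by
    have hy := norm_smul_normalize y
    have hx1 : ‖x‖⁻¹ * ‖x‖ = 1 := inv_mul_cancel₀ hx0.ne'
    rw [NormedSpace.normalize]
    linear_combination (norm := module) (-‖x‖⁻¹) • hy + hx1 • normalize y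
  have hny : |‖y‖ - ‖x‖| * ‖normalize y‖ ≤ ‖x - y‖ := by
    rw [← mul_one ‖x - y‖, norm_sub_rev]
    exact mul_le_mul (abs_norm_sub_norm_le y x) (norm_normalize_le y) (norm_nonneg _)
      (norm_nonneg _)
  calc ‖normalize x - normalize y‖
      ≤ ‖x‖⁻¹ * ‖x - y‖ + ‖x‖⁻¹ * (|‖y‖ - ‖x‖| * ‖normalize y‖) := by
        rw [e]
        refine (norm_add_le _ _).trans_eq ?_
        simp only [norm_smul, norm_mul, norm_inv, Real.norm_eq_abs, abs_norm, mul_assoc]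
    _ ≤ ‖x‖⁻¹ * ‖x - y‖ + ‖x‖⁻¹ * ‖x - y‖ := by gcongr
    _ = 2 * ‖x - y‖ / ‖x‖ := by ring

theorem tendsto_normalize_sub_normalize {ι : Type*} {l : Filter ι} {x y : ι → E}
    (hx : Tendsto (fun i => ‖x i‖) l atTop) {c : ℝ} (hxy : ∀ᶠ i in l, ‖x i - y i‖ ≤ c) :
    Tendsto (fun i => normalize (x i) - normalize (y i)) l (𝓝 0) := by
  rw [tendsto_zero_iff_norm_tendsto_zero]
  refine squeeze_zero' (Eventually.of_forall fun _ => norm_nonneg _) ?_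
    (by simpa using (tendsto_inv_atTop_zero.comp hx).const_mul (2 * c))
  filter_upwards [hxy, hx.eventually_gt_atTop 0] with i hi hpos
  calc ‖normalize (x i) - normalize (y i)‖ ≤ 2 * ‖x i - y i‖ / ‖x i‖ :=
        norm_normalize_sub_normalize_le (norm_pos_iff.1 hpos) (y i)
    _ ≤ 2 * c / ‖x i‖ := by gcongr
    _ = 2 * c * ‖x i‖⁻¹ := div_eq_mul_inv _ _

theorem tendsto_dist_normalize_succ {u : ℕ → E} (hu : Tendsto (fun n => ‖u n‖) atTop atTop)
    (hstep : Tendsto (fun n => dist (u (n + 1)) (u n)) atTop (𝓝 0)) :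
    Tendsto (fun n => dist (normalize (u (n + 1))) (normalize (u n))) atTop (𝓝 0) := by
  have h := tendsto_normalize_sub_normalize hu (c := 1) <| by
    filter_upwards [hstep.eventually (gt_mem_nhds one_pos)] with n hn
    rw [← dist_eq_norm, dist_comm]
    exact hn.le
  simpa [dist_eq_norm, norm_sub_rev] using h.norm

theorem norm_eq_one_of_mapClusterPt_normalize {ι : Type*} {l : Filter ι} {u : ι → E}
    (hu : ∀ᶠ i in l, u i ≠ 0) {w : E} (hw : MapClusterPt w l (fun i => normalize (u i))) :
    ‖w‖ = 1 :=
  mem_sphere_zero_iff_norm.1 <| isClosed_sphere.mem_of_mapClusterPt hw <|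
    hu.mono fun _ hi => mem_sphere_zero_iff_norm.2 (norm_normalize hi)

theorem linearIndependent_pair_of_norm_eq_one {x y : E} (hx : ‖x‖ = 1) (hy : ‖y‖ = 1)
    (hxy : x ≠ y) (hxy' : x ≠ -y) : LinearIndependent ℝ ![x, y] := by
  rw [LinearIndependent.pair_iff' (norm_ne_zero_iff.1 (by rw [hx]; exact one_ne_zero))]
  intro a ha
  have : |a| = 1 := by simpa [norm_smul, hx, hy] using congrArg norm ha
  rcases (abs_eq zero_le_one).1 this with rfl | rfl
  · exact hxy (by simpa using ha)
  · exact hxy' (by rw [← ha]; simp)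

end Normalize

section Recession

variable {E : Type*}

def recessionCone [AddCommGroup E] [Module ℝ E] (C : Set E) : Set E :=
  {w | ∀ c ∈ C, ∀ t : ℝ, 0 ≤ t → c + t • w ∈ C}

variable [NormedAddCommGroup E] [NormedSpace ℝ E]

theorem mem_recessionCone_of_tendsto {ι : Type*} {l : Filter ι} [l.NeBot] {C : Set E}
    (hC : IsClosed C) (hconv : Convex ℝ C) {z : ι → E} (hz : ∀ i, z i ∈ C)
    (hnorm : Tendsto (fun i => ‖z i‖) l atTop) {w : E}
    (hw : Tendsto (fun i => normalize (z i)) l (𝓝 w)) : w ∈ recessionCone C := by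
  intro c hc t ht
  have hlim : Tendsto (fun i => (1 - t * ‖z i‖⁻¹) • c + (t * ‖z i‖⁻¹) • z i) l
      (𝓝 (c + t • w)) := by
    have h0 : Tendsto (fun i => t * ‖z i‖⁻¹) l (𝓝 0) := by
      simpa using (tendsto_inv_atTop_zero.comp hnorm).const_mul t
    simpa [mul_smul, NormedSpace.normalize] using
      (((tendsto_const_nhds (x := (1 : ℝ))).sub h0).smul_const c).add
      (hw.const_smul t)
  refine hC.mem_of_tendsto hlim ?_
  filter_upwards [hnorm.eventually_ge_atTop t, hnorm.eventually_gt_atTop 0] with i hti hpos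
  have hle : t * ‖z i‖⁻¹ ≤ 1 := (mul_inv_le_iff₀ hpos).2 (by linarith)
  exact hconv hc (hz i) (by linarith) (by positivity) (by ring)

theorem Set.Nonempty.inter_of_mem_recessionCone [FiniteDimensional ℝ E]
    (hdim : Module.finrank ℝ E = 2) {A B : Set E} (hA : A.Nonempty) (hB : B.Nonempty)
    {w₁ w₂ : E} (hw : LinearIndependent ℝ ![w₁, w₂])
    (hw₁ : w₁ ∈ recessionCone A ∩ recessionCone B)
    (hw₂ : w₂ ∈ recessionCone A ∩ recessionCone B) : (A ∩ B).Nonempty := by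
  obtain ⟨a, ha⟩ := hA
  obtain ⟨b, hb⟩ := hB
  obtain ⟨s, t, hst⟩ : ∃ s t : ℝ, s • w₁ + t • w₂ = b - a := by
    rw [← Submodule.mem_span_pair, ← Matrix.range_cons_cons_empty w₁ w₂ ![],
      hw.span_eq_top_of_card_eq_finrank (by simp [hdim])]
    trivial
  have hab : a + s⁺ • w₁ + t⁺ • w₂ = b + s⁻ • w₁ + t⁻ • w₂ := by
    have hb' : b = a + (s⁺ - s⁻) • w₁ + (t⁺ - t⁻) • w₂ := by
      rw [posPart_sub_negPart, posPart_sub_negPart, add_assoc, hst]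
      abel
    rw [hb']
    module
  refine ⟨a + s⁺ • w₁ + t⁺ • w₂, ?_, ?_⟩
  · exact hw₂.1 _ (hw₁.1 a ha _ (posPart_nonneg s)) _ (posPart_nonneg t)
  · rw [hab]
    exact hw₂.2 _ (hw₁.2 b hb _ (negPart_nonneg s)) _ (negPart_nonneg t)

theorem eq_or_eq_neg_of_mem_recessionCone [FiniteDimensional ℝ E]
    (hdim : Module.finrank ℝ E = 2) {A B : Set E} (hA : A.Nonempty) (hB : B.Nonempty)
    (hAB : ¬(A ∩ B).Nonempty) {p q : E} (hp : ‖p‖ = 1) (hq : ‖q‖ = 1)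
    (hpc : p ∈ recessionCone A ∩ recessionCone B) (hqc : q ∈ recessionCone A ∩ recessionCone B) :
    p = q ∨ p = -q := by
  by_contra! h
  exact hAB <| hA.inter_of_mem_recessionCone hdim hB
    (linearIndependent_pair_of_norm_eq_one hp hq h.1 h.2) hpc hqc

end Recession

section ClusterPoints

variable {E : Type*} [MetricSpace E]

theorem tendsto_of_mapClusterPt_of_tendsto_dist_succ [ProperSpace E] {u : ℕ → E}
    (hstep : Tendsto (fun n => dist (u (n + 1)) (u n)) atTop (𝓝 0)) {q : E}
    (hq : MapClusterPt q atTop u) {δ : ℝ} (hδ : 0 < δ)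
    (hclust : ∀ p, MapClusterPt p atTop u → p = q ∨ δ ≤ dist p q) :
    Tendsto u atTop (𝓝 q) := by
  suffices H : ∀ ε, 0 < ε → 2 * ε < δ → ∀ᶠ n in atTop, dist (u n) q < ε by
    refine Metric.tendsto_nhds.2 fun ε hε => ?_
    filter_upwards [H (min ε (δ / 3)) (by positivity) (by linarith [min_le_right ε (δ / 3)])]
      with n hn
    exact lt_of_lt_of_le hn (min_le_left _ _)
  intro ε hε hεδ
  -- no cluster point lies in the annulus, and steps are eventually too short to jump over it
  have hout : ∀ᶠ n in atTop, u n ∉ closedBall q (2 * ε) \ ball q ε := by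
    by_contra h
    obtain ⟨p, ⟨hp₁, hp₂⟩, hp⟩ := ((isCompact_closedBall q (2 * ε)).diff isOpen_ball
      ).exists_mapClusterPt_of_frequently (by simpa only [not_eventually, not_not] using h)
    rw [mem_closedBall] at hp₁
    rw [mem_ball, not_lt] at hp₂
    rcases hclust p hp with rfl | h
    · rw [dist_self] at hp₂; linarith
    · linarith
  obtain ⟨N, hN⟩ := eventually_atTop.1 (hout.and (hstep.eventually (gt_mem_nhds hε)))
  obtain ⟨n₀, hn₀N, hn₀⟩ := (frequently_atTop.1 (hq.frequently (ball_mem_nhds q hε))) N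
  refine eventually_atTop.2 ⟨n₀, fun n hn => ?_⟩
  induction n, hn using Nat.le_induction with
  | base => exact hn₀
  | succ n hn ih =>
    have hnext := (hN (n + 1) (by omega)).1
    have hshort := (hN n (by omega)).2
    have htri := dist_triangle (u (n + 1)) (u n) q
    by_contra h
    exact hnext ⟨mem_closedBall.2 (by linarith), by rwa [mem_ball]⟩

theorem isFixedPt_of_mapClusterPt_iterate {T : E → E} (hT : Continuous T) {y z : E}
    (hstep : Tendsto (fun n => dist (T^[n + 1] y) (T^[n] y)) atTop (𝓝 0))
    (hz : MapClusterPt z atTop (fun n => T^[n] y)) : Function.IsFixedPt T z := by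
  obtain ⟨φ, hφ, hlim⟩ := hz.tendsto_subseq
  have h₁ : Tendsto (fun k => T^[φ k + 1] y) atTop (𝓝 (T z)) := by
    simp only [Function.iterate_succ_apply']
    exact (hT.tendsto z).comp hlim
  have h₂ : Tendsto (fun k => T^[φ k + 1] y) atTop (𝓝 z) := hlim.congr_dist <| by
    simpa only [Function.comp_def, dist_comm] using hstep.comp hφ.tendsto_atTop
  exact tendsto_nhds_unique h₁ h₂

end ClusterPoints

theorem tendsto_norm_iterate_atTop {E : Type*} [NormedAddCommGroup E] [ProperSpace E]
    {T : E → E} (hT : Continuous T) (hfix : ∀ x, T x ≠ x) {y : E}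
    (hstep : Tendsto (fun n => dist (T^[n + 1] y) (T^[n] y)) atTop (𝓝 0)) :
    Tendsto (fun n => ‖T^[n] y‖) atTop atTop := by
  refine tendsto_norm_cocompact_atTop.comp (hasBasis_cocompact.tendsto_right_iff.2 fun K hK => ?_)
  by_contra h
  obtain ⟨z, -, hz⟩ := hK.exists_mapClusterPt_of_frequently <| by
    simpa only [not_eventually, Set.mem_compl_iff, not_not] using h
  exact hfix z (isFixedPt_of_mapClusterPt_iterate hT hstep hz)

theorem tendsto_zero_of_add_le_self {g d : ℕ → ℝ} (hg : ∀ n, 0 ≤ g n) (hd : ∀ n, 0 ≤ d n)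
    (h : ∀ n, g (n + 1) + d n ≤ g n) : Tendsto d atTop (𝓝 0) := by
  have hanti : Antitone g := antitone_nat_of_succ_le fun n => by linarith [h n, hd n]
  obtain ⟨L, hL⟩ : ∃ L, Tendsto g atTop (𝓝 L) :=
    ⟨_, tendsto_atTop_ciInf hanti ⟨0, by rintro _ ⟨n, rfl⟩; exact hg n⟩⟩
  have hdiff : Tendsto (fun n => g n - g (n + 1)) atTop (𝓝 0) := by
    simpa using hL.sub (hL.comp (tendsto_add_atTop_nat 1))
  exact squeeze_zero hd (fun n => by linarith [h n]) hdiff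

section AlternatingProjections

variable {X : Type*} [NormedAddCommGroup X] [InnerProductSpace ℝ X] {A B : Set X}
  {PA PB : X → X}

theorem IsProjector.iterate_comp_mem (hPB : IsProjector B PB) (f : X → X) {y : X} (hy : y ∈ B)
    (n : ℕ) : (PB ∘ f)^[n] y ∈ B := by
  cases n with
  | zero => exact hy
  | succ n => rw [Function.iterate_succ_apply']; exact (hPB _).1

theorem norm_sub_sq_add_dist_sq_le (hPA : IsProjector A PA) (hPB : IsProjector B PB)
    (hB : Convex ℝ B) {b : X} (hb : b ∈ B) :
    ‖(PB ∘ PA) b - PA ((PB ∘ PA) b)‖ ^ 2 + dist ((PB ∘ PA) b) b ^ 2 ≤ ‖b - PA b‖ ^ 2 := by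
  have h₁ : ‖PB (PA b) - PA (PB (PA b))‖ ≤ ‖PA b - PB (PA b)‖ :=
    (norm_sub_rev (PA b) _).symm ▸ (hPA _).2 _ (hPA b).1
  have h₂ := hPB.norm_sub_sq_add_norm_sub_sq_le hB (PA b) hb
  rw [norm_sub_rev (PA b) b] at h₂
  rw [Function.comp_apply, dist_eq_norm]
  nlinarith [pow_le_pow_left₀ (norm_nonneg _) h₁ 2]

theorem norm_iterate_sub_le (hPA : IsProjector A PA) (hPB : IsProjector B PB)
    (hB : Convex ℝ B) {y : X} (hy : y ∈ B) (n : ℕ) :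
    ‖(PB ∘ PA)^[n] y - PA ((PB ∘ PA)^[n] y)‖ ≤ ‖y - PA y‖ := by
  have hanti : Antitone fun n => ‖(PB ∘ PA)^[n] y - PA ((PB ∘ PA)^[n] y)‖ :=
    antitone_nat_of_succ_le fun n => by
      have h := norm_sub_sq_add_dist_sq_le hPA hPB hB (hPB.iterate_comp_mem PA hy n)
      rw [Function.iterate_succ_apply']
      exact (pow_le_pow_iff_left₀ (norm_nonneg _) (norm_nonneg _) two_ne_zero).1
        (le_of_add_le_of_nonneg_left h (sq_nonneg _))
  exact hanti (Nat.zero_le n)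

theorem tendsto_dist_iterate_succ (hPA : IsProjector A PA) (hPB : IsProjector B PB)
    (hB : Convex ℝ B) {y : X} (hy : y ∈ B) :
    Tendsto (fun n => dist ((PB ∘ PA)^[n + 1] y) ((PB ∘ PA)^[n] y)) atTop (𝓝 0) := by
  have h := tendsto_zero_of_add_le_self
    (g := fun n => ‖(PB ∘ PA)^[n] y - PA ((PB ∘ PA)^[n] y)‖ ^ 2)
    (d := fun n => dist ((PB ∘ PA)^[n + 1] y) ((PB ∘ PA)^[n] y) ^ 2)
    (fun _ => sq_nonneg _) (fun _ => sq_nonneg _) fun n => by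
      rw [Function.iterate_succ_apply']
      exact norm_sub_sq_add_dist_sq_le hPA hPB hB (hPB.iterate_comp_mem PA hy n)
  simpa [Function.comp_def, Real.sqrt_sq_eq_abs] using (Real.continuous_sqrt.tendsto 0).comp h

theorem IsProjector.isFixedPt_comp (hPA : IsProjector A PA) (hPB : IsProjector B PB) {z : X}
    (hz : z ∈ A ∩ B) : Function.IsFixedPt (PB ∘ PA) z := by
  simp [Function.IsFixedPt, hPA.apply_eq_self hz.1, hPB.apply_eq_self hz.2]

theorem mem_recessionCone_of_mapClusterPt (hPA : IsProjector A PA) (hPB : IsProjector B PB)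
    (hAcl : IsClosed A) (hAconv : Convex ℝ A) (hBcl : IsClosed B) (hBconv : Convex ℝ B)
    {y : X} (hy : y ∈ B) (hnorm : Tendsto (fun n => ‖(PB ∘ PA)^[n] y‖) atTop atTop) {w : X}
    (hw : MapClusterPt w atTop (fun n => normalize ((PB ∘ PA)^[n] y))) :
    w ∈ recessionCone A ∩ recessionCone B := by
  obtain ⟨φ, hφ, hlim⟩ := hw.tendsto_subseq
  set b := fun k => (PB ∘ PA)^[φ k] y
  have hlim' : Tendsto (fun k => normalize (b k)) atTop (𝓝 w) := hlim
  have hgap : ∀ k, ‖b k - PA (b k)‖ ≤ ‖y - PA y‖ := fun k =>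
    norm_iterate_sub_le hPA hPB hBconv hy (φ k)
  have hb : Tendsto (fun k => ‖b k‖) atTop atTop := hnorm.comp hφ.tendsto_atTop
  have ha : Tendsto (fun k => ‖PA (b k)‖) atTop atTop :=
    tendsto_atTop_mono (fun k => by linarith [norm_sub_norm_le (b k) (PA (b k)), hgap k])
      (tendsto_atTop_add_const_right _ (-‖y - PA y‖) hb)
  have hab : Tendsto (fun k => normalize (b k) - normalize (PA (b k))) atTop (𝓝 0) :=
    tendsto_normalize_sub_normalize hb (Eventually.of_forall hgap)
  refine ⟨mem_recessionCone_of_tendsto hAcl hAconv (fun k => (hPA _).1) ha ?_,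
    mem_recessionCone_of_tendsto hBcl hBconv (fun k => hPB.iterate_comp_mem PA hy _) hb hlim'⟩
  simpa only [sub_sub_cancel, sub_zero] using hlim'.sub hab

end AlternatingProjections

/-- In dimension `2`, for fixed-point free `T = P_B ∘ P_A` the
normalized iterates `Tⁿx/‖Tⁿx‖` converge for every `x`. -/
theorem stmt14 {X : Type*} [NormedAddCommGroup X] [InnerProductSpace ℝ X]
    [FiniteDimensional ℝ X] (hdim : Module.finrank ℝ X = 2)
    (A B : Set X) (hAne : A.Nonempty) (hAcl : IsClosed A) (hAconv : Convex ℝ A)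
    (hBne : B.Nonempty) (hBcl : IsClosed B) (hBconv : Convex ℝ B)
    (PA PB : X → X) (hPA : IsProjector A PA) (hPB : IsProjector B PB)
    (T : X → X) (hT : T = PB ∘ PA) (hfix : ∀ x : X, T x ≠ x) :
    ∀ x : X, ∃ q : X,
      Tendsto (fun n : ℕ => ‖T^[n] x‖⁻¹ • T^[n] x) atTop (nhds q) := by
  intro x
  subst hT
  have hy : (PB ∘ PA) x ∈ B := (hPB _).1
  have hcont : Continuous (PB ∘ PA) :=
    ((hPB.lipschitzWith_one hBconv).comp (hPA.lipschitzWith_one hAconv)).continuous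
  have hstep := tendsto_dist_iterate_succ hPA hPB hBconv hy
  have hnorm := tendsto_norm_iterate_atTop hcont hfix hstep
  set u := fun n => normalize ((PB ∘ PA)^[n] ((PB ∘ PA) x))
  have hunit : ∀ w, MapClusterPt w atTop u → ‖w‖ = 1 := fun w =>
    norm_eq_one_of_mapClusterPt_normalize
      ((hnorm.eventually_gt_atTop 0).mono fun _ hn => norm_pos_iff.1 hn)
  have hdir : ∀ w, MapClusterPt w atTop u → w ∈ recessionCone A ∩ recessionCone B := fun w =>
    mem_recessionCone_of_mapClusterPt hPA hPB hAcl hAconv hBcl hBconv hy hnorm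
  have hAB : ¬(A ∩ B).Nonempty := fun ⟨z, hz⟩ => hfix z (hPA.isFixedPt_comp hPB hz)
  obtain ⟨q, -, hq⟩ := (isCompact_closedBall (0 : X) 1).exists_mapClusterPt_of_frequently
    (l := atTop) (f := u) (.of_forall fun n => mem_closedBall_zero_iff.2 (norm_normalize_le _))
  refine ⟨q, (tendsto_add_atTop_iff_nat 1).1 ?_⟩
  simp only [Function.iterate_succ_apply]
  refine tendsto_of_mapClusterPt_of_tendsto_dist_succ (tendsto_dist_normalize_succ hnorm hstep)
    hq two_pos fun p hp => ?_
  rcases eq_or_eq_neg_of_mem_recessionCone hdim hAne hBne hAB (hunit p hp) (hunit q hq)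
    (hdir p hp) (hdir q hq) with rfl | rfl
  · exact Or.inl rfl
  · right
    rw [dist_eq_norm, ← neg_add', norm_neg, ← two_smul ℝ, norm_smul, hunit q hq]
    norm_num
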